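/- For any finite unordered rooted tree τ, the DAG reduction R(τ) has at least H(τ)+1 vertices, and it has exactly H(τ)+1 vertices if and only if τ is self-nested. -/

import Mathlib

/-- A finite rooted tree whose vertices form a finite subset `supp` of `ℕ`.
`par` maps each vertex to its parent; the root is a fixed point of `par`
(so it has no parent), and every vertex reaches the root by iterating `par`
(connectedness / acyclicity). -/
structure FTree where
  supp : Finset ℕ
  root : ℕ
  root_mem : root ∈ supp
  par : ℕ → ℕ
  par_mem : ∀ v ∈ supp, par v ∈ supp
  par_root : par root = root
  reach : ∀ v ∈ supp, ∃ n, par^[n] v = root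

namespace FTree

/-- Depth of a vertex: least number of parent steps needed to reach the root. -/
noncomputable def depth (t : FTree) (v : ℕ) : ℕ :=
  if h : v ∈ t.supp then Nat.find (t.reach v h) else 0

/-- `w` is a (weak) descendant of `v` in `t`. -/
def IsDesc (t : FTree) (v w : ℕ) : Prop :=
  w ∈ t.supp ∧ ∃ n ≤ t.depth w, t.par^[n] w = v

open Classical in
/-- Vertex set of the subtree `t[v]` rooted at `v`. -/
noncomputable def desc (t : FTree) (v : ℕ) : Finset ℕ :=
  t.supp.filter (fun w => t.IsDesc v w)

/-- Height of the subtree `t[v]` rooted at `v`. -/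
noncomputable def heightAt (t : FTree) (v : ℕ) : ℕ :=
  (t.desc v).sup (fun w => t.depth w) - t.depth v

/-- Height of the tree. -/
noncomputable def height (t : FTree) : ℕ := t.heightAt t.root

/-- The set of children of `v` in `t`. -/
def children (t : FTree) (v : ℕ) : Finset ℕ :=
  t.supp.filter (fun w => t.par w = v ∧ w ≠ t.root)

open Classical in
/-- `γ_h(v)`: number of children of `v` whose subtree has height `h`. -/
noncomputable def gam (t : FTree) (v h : ℕ) : ℕ :=
  ((t.children v).filter (fun c => t.heightAt c = h)).card

/-- The subtree of `t` rooted at `v` is isomorphic (as an unordered rooted tree)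
to the subtree of `s` rooted at `w`: a bijection between the vertex sets sending
root to root and commuting with the parent maps (i.e. mapping edges to edges). -/
def SubtreeIso (t : FTree) (v : ℕ) (s : FTree) (w : ℕ) : Prop :=
  ∃ φ : ℕ → ℕ, Set.BijOn φ (t.desc v : Set ℕ) (s.desc w : Set ℕ) ∧ φ v = w ∧
    ∀ x ∈ t.desc v, x ≠ v → φ (t.par x) = s.par (φ x)

/-- Isomorphism of rooted trees. -/
def TreeIso (t s : FTree) : Prop := SubtreeIso t t.root s s.root

/-- A tree is self-nested if any two of its subtrees of the same height
are isomorphic. -/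
def SelfNested (t : FTree) : Prop :=
  ∀ v ∈ t.supp, ∀ w ∈ t.supp, t.heightAt v = t.heightAt w → SubtreeIso t v t w

open Classical in
/-- Height profile entry `ρ_t(h1,h2)`: the multiset (family up to permutation) of
the values `γ_{h2}(v)` over all vertices `v` of `t` with `H(t[v]) = h1`. -/
noncomputable def profile (t : FTree) (h1 h2 : ℕ) : Multiset ℕ :=
  (t.supp.filter (fun v => t.heightAt v = h1)).val.map (fun v => t.gam v h2)

/-- Number of vertices of `t`. -/
def numV (t : FTree) : ℕ := t.supp.card

/-- `a` is a (weak) ancestor of `b`. -/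
def IsAnc (t : FTree) (a b : ℕ) : Prop := ∃ n, t.par^[n] b = a

/-- `a` is a proper ancestor of `b`. -/
def ProperAnc (t : FTree) (a b : ℕ) : Prop := a ≠ b ∧ t.IsAnc a b

/-- `l` is the least common ancestor of `a` and `b`. -/
def IsLCA (t : FTree) (a b l : ℕ) : Prop :=
  l ∈ t.supp ∧ t.IsAnc l a ∧ t.IsAnc l b ∧
    ∀ m ∈ t.supp, t.IsAnc m a → t.IsAnc m b → t.IsAnc m l

/-- `φ`, restricted to the domain `D ⊆ t.supp`, is a constrained mapping in the
sense of Zhang from `t` to `s`: a one-to-one correspondence preserving the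
ancestor order, satisfying moreover Zhang's condition on least common ancestors. -/
def ZhangMapping (t s : FTree) (D : Finset ℕ) (φ : ℕ → ℕ) : Prop :=
  D ⊆ t.supp ∧ (∀ x ∈ D, φ x ∈ s.supp) ∧ Set.InjOn φ (D : Set ℕ) ∧
  (∀ a ∈ D, ∀ b ∈ D, (t.ProperAnc a b ↔ s.ProperAnc (φ a) (φ b))) ∧
  (∀ v1 ∈ D, ∀ v2 ∈ D, ∀ v3 ∈ D, ∀ l l',
    t.IsLCA v1 v2 l → s.IsLCA (φ v1) (φ v2) l' →
    (t.ProperAnc l v3 ↔ s.ProperAnc l' (φ v3)))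

/-- Allowed inserting operation (AI): adding a new internal vertex `w` as a child of
`v`, making `w` the parent of the child `c` of `v`; allowed only if
`H(t[c]) + 1 < H(t[v])`. -/
def InsertAI (t θ : FTree) : Prop :=
  ∃ v c w, v ∈ t.supp ∧ c ∈ t.children v ∧ w ∉ t.supp ∧
    t.heightAt c + 1 < t.heightAt v ∧
    θ.supp = insert w t.supp ∧ θ.root = t.root ∧
    θ.par w = v ∧ θ.par c = w ∧ ∀ x ∈ t.supp, x ≠ c → θ.par x = t.par x

/-- Allowed inserting operation (AS): attaching a tree `s` as a new child subtree of
`v`; allowed only if `H(s) + 1 ≤ H(t[v])`. -/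
def InsertAS (t θ : FTree) : Prop :=
  ∃ (v : ℕ) (s : FTree), v ∈ t.supp ∧ Disjoint s.supp t.supp ∧
    s.height + 1 ≤ t.heightAt v ∧
    θ.supp = t.supp ∪ s.supp ∧ θ.root = t.root ∧ θ.par s.root = v ∧
    (∀ x ∈ t.supp, θ.par x = t.par x) ∧ (∀ x ∈ s.supp, x ≠ s.root → θ.par x = s.par x)

/-- One allowed inserting operation. -/
def InsertStep (t θ : FTree) : Prop := InsertAI t θ ∨ InsertAS t θ

/-- Allowed deleting operation (DI): deleting an internal vertex `v`, child of `u`,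
having a unique child `c` (which becomes a child of `u`); allowed only if `u` has
another child `v'` with `H(t[v']) ≥ H(t[v])`. -/
def DeleteDI (t θ : FTree) : Prop :=
  ∃ u v c, v ∈ t.children u ∧ t.children v = {c} ∧
    (∃ v' ∈ t.children u, v' ≠ v ∧ t.heightAt v ≤ t.heightAt v') ∧
    θ.supp = t.supp.erase v ∧ θ.root = t.root ∧ θ.par c = u ∧
    ∀ x ∈ t.supp, x ≠ v → x ≠ c → θ.par x = t.par x

/-- Allowed deleting operation (DS): deleting the whole subtree rooted at a child `w`
of `v`; allowed only if `v` has another child `w'` with `H(t[w']) + 1 = H(t[v])`. -/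
def DeleteDS (t θ : FTree) : Prop :=
  ∃ v w, w ∈ t.children v ∧
    (∃ w' ∈ t.children v, w' ≠ w ∧ t.heightAt w' + 1 = t.heightAt v) ∧
    θ.supp = t.supp \ t.desc w ∧ θ.root = t.root ∧
    ∀ x ∈ θ.supp, θ.par x = t.par x

/-- One allowed deleting operation. -/
def DeleteStep (t θ : FTree) : Prop := DeleteDI t θ ∨ DeleteDS t θ

/-- A general single-vertex inserting operation: a new vertex `w` is added as a child
of `v`, and the vertices of a subset `C` of the children of `v` become children of `w`. -/
def GeneralInsert (t θ : FTree) : Prop :=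
  ∃ (v w : ℕ) (C : Finset ℕ), v ∈ t.supp ∧ w ∉ t.supp ∧ C ⊆ t.children v ∧
    θ.supp = insert w t.supp ∧ θ.root = t.root ∧ θ.par w = v ∧
    (∀ x ∈ C, θ.par x = w) ∧ ∀ x ∈ t.supp, x ∉ C → θ.par x = t.par x

/-- Cost of a constrained mapping with domain `D`: vertices of `t` not in the domain
are deleted, vertices of `s` not in the image are inserted (unit costs). -/
def mappingCost (t s : FTree) (D : Finset ℕ) (φ : ℕ → ℕ) : ℕ :=
  (t.numV - D.card) + (s.numV - (D.image φ).card)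

/-- Zhang's constrained edit distance between unordered trees: the minimal cost
associated with a constrained mapping between `t` and `s`. -/
noncomputable def DZ (t s : FTree) : ℕ :=
  sInf { c | ∃ (D : Finset ℕ) (φ : ℕ → ℕ), ZhangMapping t s D φ ∧ c = mappingCost t s D φ }

end FTree

/-!
Isomorphic subtrees have the same height, and every height `0, …, H(t)` is attained, by the
ancestors of a deepest vertex. So the heights of the representatives in `L` fill up
`{0, …, H(t)}`, and `L` has exactly `H(t) + 1` entries iff no two representatives share a
height, i.e. iff subtrees of equal height are always isomorphic.
-/

namespace FTree

variable {t s r : FTree} {u v w x : ℕ} {n h : ℕ}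

lemma iterate_par_mem (hv : v ∈ t.supp) (n : ℕ) : t.par^[n] v ∈ t.supp := by
  induction n with
  | zero => exact hv
  | succ n ih => rw [Function.iterate_succ_apply']; exact t.par_mem _ ih

lemma iterate_par_root (t : FTree) (n : ℕ) : t.par^[n] t.root = t.root :=
  Function.iterate_fixed t.par_root n

lemma iterate_depth (hv : v ∈ t.supp) : t.par^[t.depth v] v = t.root := by
  rw [depth, dif_pos hv]
  exact Nat.find_spec (t.reach v hv)

lemma depth_le_of_iterate (hv : v ∈ t.supp) (h : t.par^[n] v = t.root) : t.depth v ≤ n := by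
  rw [depth, dif_pos hv]
  exact Nat.find_le h

lemma depth_root (t : FTree) : t.depth t.root = 0 :=
  Nat.le_zero.mp (depth_le_of_iterate t.root_mem rfl)

lemma iterate_par_eq_root (hv : v ∈ t.supp) (hn : t.depth v ≤ n) : t.par^[n] v = t.root := by
  rw [← Nat.sub_add_cancel hn, Function.iterate_add_apply, iterate_depth hv, iterate_par_root]

lemma depth_le_add_of_iterate (hv : v ∈ t.supp) (h : t.par^[n] v = w) :
    t.depth v ≤ t.depth w + n := by
  apply depth_le_of_iterate hv
  rw [Function.iterate_add_apply, h, iterate_depth (h ▸ iterate_par_mem hv n)]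

lemma depth_iterate (hv : v ∈ t.supp) (hn : n ≤ t.depth v) :
    t.depth (t.par^[n] v) = t.depth v - n := by
  have hle : t.depth (t.par^[n] v) ≤ t.depth v - n := by
    apply depth_le_of_iterate (iterate_par_mem hv n)
    rw [← Function.iterate_add_apply, Nat.sub_add_cancel hn, iterate_depth hv]
  have := depth_le_add_of_iterate hv (rfl : t.par^[n] v = _)
  omega

lemma mem_desc_iff : x ∈ t.desc v ↔ x ∈ t.supp ∧ t.IsAnc v x := by
  classical
  rw [desc, Finset.mem_filter, IsDesc, IsAnc, and_self_left]
  refine and_congr_right fun hx => ⟨fun ⟨n, _, hn⟩ => ⟨n, hn⟩, fun ⟨n, hn⟩ => ?_⟩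
  by_cases hnx : n ≤ t.depth x
  · exact ⟨n, hnx, hn⟩
  · -- beyond `depth x` the iterates are stuck at the root
    refine ⟨t.depth x, le_rfl, ?_⟩
    rw [iterate_depth hx, ← hn, iterate_par_eq_root hx (by omega)]

lemma self_mem_desc (hv : v ∈ t.supp) : v ∈ t.desc v :=
  mem_desc_iff.2 ⟨hv, 0, rfl⟩

lemma desc_root (t : FTree) : t.desc t.root = t.supp := by
  ext x
  exact ⟨fun hx => (mem_desc_iff.1 hx).1,
    fun hx => mem_desc_iff.2 ⟨hx, _, iterate_depth hx⟩⟩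

lemma depth_le_and_iterate_of_mem_desc (hx : x ∈ t.desc v) :
    t.depth v ≤ t.depth x ∧ t.par^[t.depth x - t.depth v] x = v := by
  classical
  obtain ⟨hxs, n, hn, rfl⟩ := (Finset.mem_filter.1 hx).2
  rw [depth_iterate hxs hn, Nat.sub_sub_self hn]
  exact ⟨Nat.sub_le _ _, rfl⟩

lemma iterate_par_mem_desc (hx : x ∈ t.desc v) (hn : n ≤ t.depth x - t.depth v) :
    t.par^[n] x ∈ t.desc v := by
  obtain ⟨-, hit⟩ := depth_le_and_iterate_of_mem_desc hx
  refine mem_desc_iff.2 ⟨iterate_par_mem (mem_desc_iff.1 hx).1 n, t.depth x - t.depth v - n, ?_⟩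
  rwa [← Function.iterate_add_apply, Nat.sub_add_cancel hn]

lemma par_mem_desc (hx : x ∈ t.desc v) (hxv : x ≠ v) : t.par x ∈ t.desc v := by
  obtain ⟨-, hit⟩ := depth_le_and_iterate_of_mem_desc hx
  refine iterate_par_mem_desc hx (n := 1) (Nat.one_le_iff_ne_zero.2 fun h0 => hxv ?_)
  rwa [h0] at hit

lemma heightAt_le_iff : t.heightAt v ≤ h ↔ ∀ x ∈ t.desc v, t.depth x ≤ t.depth v + h := by
  rw [heightAt, tsub_le_iff_left, Finset.sup_le_iff]

lemma depth_le_add_heightAt (hx : x ∈ t.desc v) : t.depth x ≤ t.depth v + t.heightAt v :=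
  heightAt_le_iff.1 le_rfl x hx

lemma depth_le_height (hx : x ∈ t.supp) : t.depth x ≤ t.height := by
  have := depth_le_add_heightAt (t.desc_root ▸ hx : x ∈ t.desc t.root)
  rwa [depth_root, zero_add] at this

lemma heightAt_le_height (t : FTree) (v : ℕ) : t.heightAt v ≤ t.height :=
  heightAt_le_iff.2 fun _ hx => le_add_left (depth_le_height (mem_desc_iff.1 hx).1)

lemma exists_heightAt_eq (hh : h ≤ t.height) : ∃ v ∈ t.supp, t.heightAt v = h := by
  obtain ⟨x, hx, hxd⟩ :=
    Finset.exists_mem_eq_sup (t.desc t.root) ⟨_, self_mem_desc t.root_mem⟩ t.depth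
  rw [desc_root] at hx
  replace hxd : t.depth x = t.height := by
    rw [← hxd, height, heightAt, depth_root, Nat.sub_zero]
  -- the ancestors of a deepest vertex have the largest height their depth allows
  refine ⟨t.par^[h] x, iterate_par_mem hx h, le_antisymm ?_ ?_⟩
  · refine heightAt_le_iff.2 fun y hy => ?_
    rw [depth_iterate hx (hxd ▸ hh), hxd, Nat.sub_add_cancel hh]
    exact depth_le_height (mem_desc_iff.1 hy).1
  · have := depth_le_add_heightAt (mem_desc_iff.2 ⟨hx, h, rfl⟩)
    rw [depth_iterate hx (hxd ▸ hh)] at this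
    omega

theorem SubtreeIso.refl (t : FTree) (v : ℕ) : SubtreeIso t v t v :=
  ⟨id, Set.bijOn_id _, rfl, fun _ _ _ => rfl⟩

theorem SubtreeIso.symm (h : SubtreeIso t v s w) (hv : v ∈ t.supp) : SubtreeIso s w t v := by
  obtain ⟨φ, hbij, hroot, hpar⟩ := h
  have hinv : Set.InvOn (Function.invFunOn φ (t.desc v)) φ (t.desc v) (s.desc w) :=
    hbij.invOn_invFunOn
  refine ⟨_, hbij.symm hinv.symm, hroot ▸ hinv.1 (self_mem_desc hv), fun y hy hyw => ?_⟩
  obtain ⟨x, hx, rfl⟩ := hbij.surjOn hy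
  have hxv : x ≠ v := fun hxv => hyw (hxv ▸ hroot)
  rw [hinv.1 hx, ← hpar x hx hxv, hinv.1 (par_mem_desc hx hxv)]

theorem SubtreeIso.trans (h₁ : SubtreeIso t v s w) (hv : v ∈ t.supp)
    (h₂ : SubtreeIso s w r u) : SubtreeIso t v r u := by
  obtain ⟨φ, hφ, rfl, hpφ⟩ := h₁
  obtain ⟨ψ, hψ, rfl, hpψ⟩ := h₂
  refine ⟨ψ ∘ φ, hψ.comp hφ, rfl, fun x hx hxv => ?_⟩
  have hφx : φ x ≠ φ v := fun h => hxv (hφ.injOn hx (self_mem_desc hv) h)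
  rw [Function.comp_apply, hpφ x hx hxv, hpψ (φ x) (hφ.mapsTo hx) hφx, Function.comp_apply]

lemma map_iterate_par {φ : ℕ → ℕ}
    (hpar : ∀ x ∈ t.desc v, x ≠ v → φ (t.par x) = s.par (φ x)) (hx : x ∈ t.desc v)
    (hn : n ≤ t.depth x - t.depth v) : φ (t.par^[n] x) = s.par^[n] (φ x) := by
  obtain ⟨hle, -⟩ := depth_le_and_iterate_of_mem_desc hx
  have hxs := (mem_desc_iff.1 hx).1
  induction n with
  | zero => rfl
  | succ n ih =>
    have hz : t.par^[n] x ∈ t.desc v := iterate_par_mem_desc hx (by omega)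
    have hzv : t.par^[n] x ≠ v := fun hzv => by
      have := depth_iterate hxs (n := n) (by omega)
      rw [hzv] at this
      omega
    rw [Function.iterate_succ_apply', Function.iterate_succ_apply', hpar _ hz hzv,
      ih (by omega)]

theorem SubtreeIso.heightAt_le (h : SubtreeIso t v s w) : s.heightAt w ≤ t.heightAt v := by
  obtain ⟨φ, hbij, rfl, hpar⟩ := h
  refine heightAt_le_iff.2 fun y hy => ?_
  obtain ⟨x, hx, rfl⟩ := hbij.surjOn hy
  obtain ⟨-, hit⟩ := depth_le_and_iterate_of_mem_desc hx
  have hmap := map_iterate_par hpar hx le_rfl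
  rw [hit] at hmap
  have := depth_le_add_of_iterate (mem_desc_iff.1 (hbij.mapsTo hx)).1 hmap.symm
  have := depth_le_add_heightAt hx
  omega

theorem SubtreeIso.heightAt_eq (h : SubtreeIso t v s w) (hv : v ∈ t.supp) :
    t.heightAt v = s.heightAt w :=
  le_antisymm (h.symm hv).heightAt_le h.heightAt_le

section Representatives

variable {L : List ℕ}

lemma toFinset_map_heightAt (hcover : ∀ v ∈ t.supp, ∃ x ∈ L, SubtreeIso t v t x) :
    (L.map t.heightAt).toFinset = Finset.range (t.height + 1) := by
  ext h
  simp only [List.mem_toFinset, List.mem_map, Finset.mem_range, Nat.lt_succ_iff]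
  refine ⟨fun ⟨x, _, hx⟩ => hx ▸ heightAt_le_height t x, fun hh => ?_⟩
  obtain ⟨v, hv, rfl⟩ := exists_heightAt_eq hh
  obtain ⟨x, hxL, hvx⟩ := hcover v hv
  exact ⟨x, hxL, (hvx.heightAt_eq hv).symm⟩

lemma nodup_map_heightAt_iff (hmem : ∀ x ∈ L, x ∈ t.supp)
    (hpair : L.Pairwise fun a b => ¬ SubtreeIso t a t b)
    (hcover : ∀ v ∈ t.supp, ∃ x ∈ L, SubtreeIso t v t x) :
    (L.map t.heightAt).Nodup ↔ t.SelfNested := by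
  refine ⟨fun hnodup v hv w hw hvw => ?_, fun hsn => ?_⟩
  · obtain ⟨x, hxL, hvx⟩ := hcover v hv
    obtain ⟨y, hyL, hwy⟩ := hcover w hw
    obtain rfl : x = y := List.inj_on_of_nodup_map hnodup hxL hyL
      (by rw [← hvx.heightAt_eq hv, ← hwy.heightAt_eq hw, hvw])
    exact hvx.trans hv (hwy.symm hw)
  · rw [List.Nodup, List.pairwise_map]
    exact hpair.imp_of_mem fun ha hb hab heq => hab (hsn _ (hmem _ ha) _ (hmem _ hb) heq)

end Representatives

end FTree

/-- The vertices of the DAG reduction are the isomorphism classes of subtrees of `t`,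
represented here by any list `L` of vertices of `t` whose rooted subtrees are pairwise
non-isomorphic and such that every subtree of `t` is isomorphic to one rooted in `L`; the
number of vertices of the DAG reduction is then the length of `L`. -/
theorem dag_card_ge_height_succ (t : FTree) (L : List ℕ)
    (hmem : ∀ x ∈ L, x ∈ t.supp)
    (hpair : L.Pairwise fun a b => ¬ FTree.SubtreeIso t a t b)
    (hcover : ∀ v ∈ t.supp, ∃ x ∈ L, FTree.SubtreeIso t v t x) :
    t.height + 1 ≤ L.length ∧ (L.length = t.height + 1 ↔ t.SelfNested) := by
  have hcard : (L.map t.heightAt).toFinset.card = t.height + 1 := by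
    rw [FTree.toFinset_map_heightAt hcover, Finset.card_range]
  rw [← L.length_map t.heightAt, ← hcard, ← FTree.nodup_map_heightAt_iff hmem hpair hcover]
  exact ⟨List.toFinset_card_le _, eq_comm.trans Multiset.toFinset_card_eq_card_iff_nodup⟩
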